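/- arXiv:1912.12260 — 3 statements merged into one kernel-verified Lean document; each statement's English description precedes it below -/
import Mathlib

section
/- Let d_0,...,d_n be positive real algebraic integers such that each d_j is the Frobenius–Perron eigenvalue of its minimal polynomial, i.e., |σ(d_j)| ≤ d_j for every field embedding σ of Q(d_j) into C. Let c_0,...,c_n be nonnegative integers, not all zero, and set s = Σ c_j d_j. Then for every σ in Gal(Q̄/Q(s)) and every j with c_j ≠ 0, we have σ(d_j) = d_j; in particular d_j ∈ Q(s) whenever c_j ≠ 0. -/
open IntermediateField

set_option maxHeartbeats 1000000
set_option synthInstance.maxHeartbeats 400000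

/-- Any `ℚ`-algebra endomorphism of the field of algebraic numbers (the algebraic
closure of `ℚ` inside `ℂ`) extends to a `ℚ`-algebra endomorphism of `ℂ`. -/
theorem exists_algHom_complex_ext (M : IntermediateField ℚ ℂ)
    [IsAlgClosed M] [Algebra.IsAlgebraic ℚ M] (f : M →ₐ[ℚ] M) :
    ∃ σ : ℂ →ₐ[ℚ] ℂ, ∀ x : M, σ x = (f x : ℂ) := by
  obtain ⟨ι, T, hT⟩ := exists_isTranscendenceBasis' M ℂ
  set R := Algebra.adjoin (↥M) (Set.range T) with hR
  haveI : IsAlgClosure R ℂ := IsAlgClosed.isAlgClosure_of_transcendence_basis T hT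
  haveI : NoZeroSMulDivisors R ℂ :=
    ⟨fun {c x} h => by
      rw [Algebra.smul_def, mul_eq_zero] at h
      exact h.imp_left fun h => (map_eq_zero_iff _ Subtype.val_injective).1 h⟩
  haveI : NoZeroSMulDivisors ℚ (↥M) :=
    ⟨fun {c x} h => by
      rw [Algebra.smul_def, mul_eq_zero] at h
      exact h.imp_left fun h => (map_eq_zero_iff _ (algebraMap ℚ M).injective).1 h⟩
  have fbij : Function.Bijective f := Algebra.IsAlgebraic.algHom_bijective f
  let fe : M ≃ₐ[ℚ] M := AlgEquiv.ofBijective f fbij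
  let pe : MvPolynomial ι M ≃+* MvPolynomial ι M := (MvPolynomial.mapAlgEquiv ι fe).toRingEquiv
  let e : R ≃+* R :=
    hT.1.aevalEquiv.toRingEquiv.symm.trans (pe.trans hT.1.aevalEquiv.toRingEquiv)
  let σ' : ℂ ≃+* ℂ := IsAlgClosure.equivOfEquiv ℂ ℂ e
  refine ⟨σ'.toRingHom.toRatAlgHom, fun x => ?_⟩
  have hxR : (x : ℂ) = algebraMap R ℂ (algebraMap M R x) :=
    IsScalarTower.algebraMap_apply M R ℂ x
  have hstep1 : hT.1.aevalEquiv.toRingEquiv.symm (algebraMap M R x) = MvPolynomial.C x := by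
    apply hT.1.aevalEquiv.toRingEquiv.injective
    rw [RingEquiv.apply_symm_apply]
    have := hT.1.aevalEquiv.commutes x
    rw [← MvPolynomial.algebraMap_eq]; exact this.symm
  have hstep2 : pe (MvPolynomial.C x) = MvPolynomial.C (fe x) := by
    simp [pe]
  have hstep3 : hT.1.aevalEquiv.toRingEquiv (MvPolynomial.C (fe x))
      = algebraMap M R (fe x) := by
    have := hT.1.aevalEquiv.commutes (fe x)
    simpa [MvPolynomial.algebraMap_eq] using this
  have he : e (algebraMap M R x) = algebraMap M R (f x) := by
    show hT.1.aevalEquiv.toRingEquiv (pe (hT.1.aevalEquiv.toRingEquiv.symm (algebraMap M R x)))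
      = algebraMap M R (f x)
    rw [hstep1, hstep2, hstep3]
    rfl
  have hgoal : σ' (x : ℂ) = (f x : ℂ) := by
    rw [hxR, IsAlgClosure.equivOfEquiv_algebraMap, he,
      ← IsScalarTower.algebraMap_apply M R ℂ (f x)]
    rfl
  simpa [RingHom.toRatAlgHom] using hgoal

/-- Lemma 1.1 (core). If `s = Σ c_j d_j` with `c_j ∈ ℕ` not all zero and the `d_j`
positive real algebraic integers maximal in modulus among their conjugates, then every
`σ ∈ Gal(Q̄/Q(s))` fixes each `d_j` with `c_j ≠ 0`; in particular `d_j ∈ ℚ(s)`. -/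
theorem stmt0 (n : ℕ) (d : Fin (n + 1) → ℂ)
    (hreal : ∀ j, (d j).im = 0) (hpos : ∀ j, 0 < (d j).re)
    (hint : ∀ j, IsIntegral ℤ (d j))
    (hFP : ∀ j, ∀ σ : ℂ →ₐ[ℚ] ℂ, ‖σ (d j)‖ ≤ (d j).re)
    (c : Fin (n + 1) → ℕ) (hc : ∃ j, c j ≠ 0)
    (s : ℂ) (hs : s = ∑ j, (c j : ℂ) * d j) :
    ∀ σ : ℂ →ₐ[ℚ] ℂ, σ s = s → ∀ j, c j ≠ 0 →
      σ (d j) = d j ∧ d j ∈ ℚ⟮s⟯ := by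
  -- Part 1: every σ fixing s fixes each d j with c j ≠ 0.
  have key : ∀ σ : ℂ →ₐ[ℚ] ℂ, σ s = s → ∀ j, c j ≠ 0 → σ (d j) = d j := by
    intro σ hσ j hj
    have hsum : ∑ k, (c k : ℂ) * σ (d k) = ∑ k, (c k : ℂ) * d k := by
      have h0 : σ s = ∑ k, (c k : ℂ) * σ (d k) := by
        rw [hs, map_sum]
        exact Finset.sum_congr rfl fun k _ => by rw [map_mul, map_natCast]
      rw [← h0, hσ, hs]
    have hre : ∑ k, (c k : ℝ) * (σ (d k)).re = ∑ k, (c k : ℝ) * (d k).re := by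
      have := congrArg Complex.re hsum
      simpa [Complex.re_sum, Complex.mul_re] using this
    have hle : ∀ k ∈ Finset.univ, (c k : ℝ) * (σ (d k)).re ≤ (c k : ℝ) * (d k).re := by
      intro k _
      exact mul_le_mul_of_nonneg_left ((Complex.re_le_norm _).trans (hFP k σ))
        (Nat.cast_nonneg _)
    have heach := (Finset.sum_eq_sum_iff_of_le hle).1 hre j (Finset.mem_univ j)
    have hrej : (σ (d j)).re = (d j).re :=
      mul_left_cancel₀ (show ((c j : ℝ)) ≠ 0 from Nat.cast_ne_zero.2 hj) heach
    have habs : ‖σ (d j)‖ = (σ (d j)).re :=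
      le_antisymm (hrej ▸ hFP j σ) (Complex.re_le_norm _)
    have hsq : (σ (d j)).re * (σ (d j)).re + (σ (d j)).im * (σ (d j)).im
        = (σ (d j)).re * (σ (d j)).re := by
      have h1 := Complex.sq_norm (σ (d j))
      rw [habs, Complex.normSq_apply] at h1
      nlinarith [h1]
    have him : (σ (d j)).im = 0 := by nlinarith [hsq]
    exact Complex.ext hrej (him.trans (hreal j).symm)
  -- Integrality / algebraicity facts.
  have hdQ : ∀ k, IsIntegral ℚ (d k) := fun k => (hint k).tower_top
  have hsQ : IsIntegral ℚ s := by
    rw [hs]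
    refine IsIntegral.sum _ fun k _ => IsIntegral.mul ?_ (hdQ k)
    have : ((c k : ℕ) : ℂ) = algebraMap ℚ ℂ (c k : ℚ) := by push_cast; rfl
    rw [this]
    exact isIntegral_algebraMap
  intro σ hσ j hj
  refine ⟨key σ hσ j hj, ?_⟩
  -- Part 2: membership.
  set M := algebraicClosure ℚ ℂ with hM
  haveI : IsAlgClosed (↥M) := (algebraicClosure.isAlgClosure ℚ ℂ).isAlgClosed
  haveI : Algebra.IsAlgebraic ℚ (↥M) := algebraicClosure.isAlgebraic ℚ ℂ
  have hsM : s ∈ M := mem_algebraicClosure_iff'.2 hsQ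
  have hdM : d j ∈ M := mem_algebraicClosure_iff'.2 (hdQ j)
  set S : M := ⟨s, hsM⟩ with hS
  set D : M := ⟨d j, hdM⟩ with hD
  set F : IntermediateField ℚ M := ℚ⟮S⟯ with hF
  haveI : CharZero (↥F) := charZero_of_injective_algebraMap (algebraMap ℚ (↥F)).injective
  have hDQ : IsIntegral ℚ D := by
    rw [← isIntegral_algebraMap_iff (algebraMap M ℂ).injective]
    exact hdQ j
  have hDint : IsIntegral (↥F) D := hDQ.tower_top
  -- every root of the minimal polynomial of D over F equals D
  have hroots : ∀ y : M, Polynomial.aeval y (minpoly (↥F) D) = 0 → y = D := by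
    intro y hy
    obtain ⟨φ, hφ⟩ := IntermediateField.exists_algHom_of_splits_of_aeval
      (fun t : M => ⟨(isIntegral_algebraMap_iff (algebraMap M ℂ).injective).1
          (mem_algebraicClosure_iff'.1 t.2) |>.tower_top,
        IsAlgClosed.splits _⟩) hy
    obtain ⟨σ₂, hσ₂⟩ := exists_algHom_complex_ext M (φ.restrictScalars ℚ)
    have hσ₂s : σ₂ s = s := by
      have h1 : σ₂ s = (φ S : ℂ) := hσ₂ S
      have h2 : φ S = S := φ.commutes ⟨S, mem_adjoin_simple_self ℚ S⟩
      rw [h1, h2]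
    have h3 : σ₂ (d j) = (y : ℂ) := by
      have := hσ₂ D
      rw [show σ₂ (d j) = σ₂ (D : ℂ) from rfl, this]
      exact congrArg _ hφ
    have h4 := key σ₂ hσ₂s j hj
    exact Subtype.ext (by rw [← h3, h4])
  -- minimal polynomial has degree one
  have hsep : (minpoly (↥F) D).Separable := (minpoly.irreducible hDint).separable
  have hsplits : ((minpoly (↥F) D).map (algebraMap (↥F) (↥M))).Splits := IsAlgClosed.splits _
  have hcard : (minpoly (↥F) D).natDegree = ((minpoly (↥F) D).aroots M).card :=
    by rw [← Polynomial.natDegree_map (algebraMap (↥F) (↥M))]; exact hsplits.natDegree_eq_card_roots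
  have hall : ∀ y ∈ (minpoly (↥F) D).aroots M, y = D := fun y hy =>
    hroots y ((Polynomial.mem_aroots.1 hy).2)
  have hrep : (minpoly (↥F) D).aroots M
      = Multiset.replicate ((minpoly (↥F) D).aroots M).card D :=
    Multiset.eq_replicate_of_mem hall
  have hnodup : ((minpoly (↥F) D).aroots M).Nodup :=
    Polynomial.nodup_roots (hsep.map (f := algebraMap (↥F) (↥M)))
  have hcard1 : ((minpoly (↥F) D).aroots M).card ≤ 1 := by
    have h5 := Multiset.nodup_iff_count_le_one.1 hnodup D
    rwa [hrep, Multiset.count_replicate_self] at h5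
  have hdeg1 : (minpoly (↥F) D).natDegree = 1 :=
    le_antisymm (hcard ▸ hcard1) (minpoly.natDegree_pos hDint)
  have hmem : D ∈ (algebraMap (↥F) (↥M)).range := minpoly.natDegree_eq_one_iff.1 hdeg1
  obtain ⟨u, hu⟩ := hmem
  -- map back to ℂ
  have hmap : F.map (IntermediateField.val M) = ℚ⟮s⟯ := by
    rw [hF]
    convert IntermediateField.adjoin_map ℚ {S} (IntermediateField.val M) using 2
    · rfl
    · rw [Set.image_singleton]; rfl
  rw [← hmap]
  refine ⟨(u : M), u.2, ?_⟩
  show ((u : M) : ℂ) = d j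
  rw [show (algebraMap (↥F) (↥M)) u = (u : M) from rfl] at hu
  rw [hu]
end

section
/- Let d_1, d_2 be positive real algebraic numbers with |σ(d_i)| ≤ d_i for all embeddings σ, and suppose the field K = Q(d_1 + d_2). Then both d_1 and d_2 belong to K. -/
open IntermediateField

set_option maxHeartbeats 1000000
set_option synthInstance.maxHeartbeats 1000000

open Polynomial in
theorem exists_extension_hom (K : IntermediateField ℚ ℂ) {a z : ℂ}
    (ha : IsIntegral K a) (hz : Polynomial.aeval z (minpoly K a) = 0) :
    ∃ σ : ℂ →ₐ[ℚ] ℂ, σ a = z ∧ ∀ k : K, σ (k : ℂ) = (k : ℂ) := by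
  classical
  set QB := algebraicClosure K ℂ with hQBdef
  have haQ : a ∈ QB := mem_algebraicClosure_iff'.2 ha
  set aQ : QB := ⟨a, haQ⟩ with haQdef
  have hminp : minpoly K a = minpoly K aQ := by
    have h := minpoly.algebraMap_eq (A := K) (B := QB) (B' := ℂ)
      (algebraMap QB ℂ).injective aQ
    rwa [show algebraMap QB ℂ aQ = a from rfl] at h
  obtain ⟨φ, hφ⟩ := IntermediateField.exists_algHom_of_splits_of_aeval
      (F := K) (E := QB) (K := ℂ)
      (fun s => ⟨(Algebra.IsAlgebraic.isAlgebraic (R := K) s).isIntegral,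
        IsAlgClosed.splits _⟩)
      (x := aQ) (y := z) (by rw [← hminp]; exact hz)
  obtain ⟨t, ht⟩ := exists_isTranscendenceBasis (↥QB) ℂ
  set x : t → ℂ := Subtype.val with hxdef
  have hAI : AlgebraicIndependent (↥QB) x := ht.1
  set A₀ := Algebra.adjoin (↥QB) (Set.range x) with hA₀
  have halgC : Algebra.IsAlgebraic (↥A₀) ℂ := ht.isAlgebraic
  let e : MvPolynomial t (↥QB) ≃ₐ[↥QB] ↥A₀ := hAI.aevalEquiv
  let g₀ : ↥A₀ →+* ℂ :=
    (MvPolynomial.eval₂Hom (φ : QB →+* ℂ) x).comp e.symm.toAlgHom.toRingHom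
  have hg₀Q : ∀ q : ↥QB, g₀ (algebraMap (↥QB) (↥A₀) q) = φ q := by
    intro q
    have h1 : e.symm (algebraMap (↥QB) (↥A₀) q) = MvPolynomial.C q := by
      rw [← MvPolynomial.algebraMap_eq]
      exact e.symm.commutes q
    simp [g₀, h1]
  -- injectivity of g₀
  have hφQB : ∀ q : ↥QB, (φ q) ∈ QB := fun q =>
    mem_algebraicClosure_iff'.2
      (((Algebra.IsAlgebraic.isAlgebraic (R := K) q).isIntegral).map φ)
  let φ₁ : ↥QB →+* ↥QB := RingHom.codRestrict (φ : QB →+* ℂ) QB hφQB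
  have heval : Function.Injective (MvPolynomial.eval₂Hom (φ : QB →+* ℂ) x) := by
    have key : ∀ p : MvPolynomial t ↥QB,
        MvPolynomial.eval₂Hom (φ : QB →+* ℂ) x p
          = MvPolynomial.aeval x (MvPolynomial.map φ₁ p) := by
      intro p
      rw [MvPolynomial.aeval_def, MvPolynomial.eval₂_map]
      have hcomp : (algebraMap (↥QB) ℂ).comp φ₁ = (φ : ↥QB →+* ℂ) := by ext q; rfl
      rw [hcomp]
      rfl
    intro p q h
    rw [key, key] at h
    exact MvPolynomial.map_injective φ₁ φ₁.injective (hAI h)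
  have hg₀inj : Function.Injective g₀ := by
    intro p q h
    simp only [g₀, RingHom.comp_apply] at h
    exact e.symm.injective (heval h)
  obtain ⟨σ₀, hσ₀⟩ : ∃ σ₀ : ℂ →+* ℂ, ∀ r : ↥A₀, σ₀ (algebraMap (↥A₀) ℂ r) = g₀ r := by
    let instS : Algebra (↥A₀) ℂ := inferInstance
    have nz1 :=
      (@Module.isTorsionFree_iff_algebraMap_injective _ _ _ _ instS _ _).2 (fun p q h => Subtype.ext h)
    let instM : Algebra (↥A₀) ℂ := g₀.toAlgebra
    have nz2 :=
      (@Module.isTorsionFree_iff_algebraMap_injective _ _ _ _ instM _ _).2 hg₀inj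
    let σl := @IsAlgClosed.lift ℂ _ _ (↥A₀) _ _ ℂ _ _ instS instM nz1 nz2 halgC
    exact ⟨@AlgHom.toRingHom (↥A₀) ℂ ℂ _ _ _ instS instM σl, fun r => @AlgHom.commutes (↥A₀) ℂ ℂ _ _ _ instS instM σl r⟩
  let σ : ℂ →ₐ[ℚ] ℂ := RingHom.toRatAlgHom σ₀
  have hσeq : ∀ w : ℂ, σ w = σ₀ w := fun w => rfl
  refine ⟨σ, ?_, ?_⟩
  · have h1 : (algebraMap (↥A₀) ℂ) ((algebraMap (↥QB) (↥A₀)) aQ) = a := rfl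
    exact (hσeq a).trans ((congrArg σ₀ h1.symm).trans ((hσ₀ _).trans ((hg₀Q aQ).trans hφ)))
  · intro k
    have h1 : (algebraMap (↥A₀) ℂ) ((algebraMap (↥QB) (↥A₀)) ((algebraMap K QB) k)) = (k : ℂ) :=
      rfl
    have h3 : φ ((algebraMap K QB) k) = (k : ℂ) := φ.commutes k
    exact (hσeq _).trans ((congrArg σ₀ h1.symm).trans ((hσ₀ _).trans ((hg₀Q _).trans h3)))

/-- Two-element case of Lemma 1.1: if `d₁, d₂` are positive real algebraic numbers
dominating all their conjugates in absolute value, then both lie in `K = ℚ(d₁ + d₂)`. -/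
theorem stmt1 (d₁ d₂ : ℂ)
    (hre₁ : d₁.im = 0) (hre₂ : d₂.im = 0)
    (hpos₁ : 0 < d₁.re) (hpos₂ : 0 < d₂.re)
    (halg₁ : IsAlgebraic ℚ d₁) (halg₂ : IsAlgebraic ℚ d₂)
    (hFP₁ : ∀ σ : ℂ →ₐ[ℚ] ℂ, ‖σ d₁‖ ≤ d₁.re)
    (hFP₂ : ∀ σ : ℂ →ₐ[ℚ] ℂ, ‖σ d₂‖ ≤ d₂.re) :
    d₁ ∈ ℚ⟮d₁ + d₂⟯ ∧ d₂ ∈ ℚ⟮d₁ + d₂⟯ := by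
  have hsum_mem : d₁ + d₂ ∈ ℚ⟮d₁ + d₂⟯ := mem_adjoin_simple_self ℚ (d₁ + d₂)
  suffices h : d₁ ∈ ℚ⟮d₁ + d₂⟯ by
    refine ⟨h, ?_⟩
    have h2 := sub_mem hsum_mem h
    simpa using h2
  by_contra hK
  set K := ℚ⟮d₁ + d₂⟯ with hKdef
  have hint : IsIntegral K d₁ := (halg₁.tower_top K).isIntegral
  set p := minpoly K d₁ with hp
  have hsep : (p.map (algebraMap K ℂ)).Separable :=
    ((minpoly.irreducible hint).separable).map
  have hnodup := Polynomial.nodup_roots hsep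
  have hcard : p.natDegree = Multiset.card (p.map (algebraMap K ℂ)).roots :=
    (Polynomial.natDegree_map _).symm.trans (IsAlgClosed.splits _).natDegree_eq_card_roots
  have hdeg : 2 ≤ p.natDegree := by
    have h1 : p.natDegree ≠ 1 := by
      intro h1
      obtain ⟨y, hy⟩ := minpoly.natDegree_eq_one_iff.mp h1
      exact hK (hy ▸ y.2)
    have h0 : 0 < p.natDegree := minpoly.natDegree_pos hint
    omega
  have hd₁root : d₁ ∈ (p.map (algebraMap K ℂ)).roots := by
    rw [Polynomial.mem_roots']
    refine ⟨(Polynomial.map_ne_zero_iff (algebraMap K ℂ).injective).2 (minpoly.ne_zero hint), ?_⟩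
    rw [Polynomial.IsRoot, Polynomial.eval_map, ← Polynomial.aeval_def]
    exact minpoly.aeval K d₁
  obtain ⟨z, hzmem, hzne⟩ : ∃ z ∈ (p.map (algebraMap K ℂ)).roots, z ≠ d₁ := by
    by_contra hall
    push_neg at hall
    have hsub : (p.map (algebraMap K ℂ)).roots.toFinset ⊆ {d₁} := by
      intro w hw
      rw [Multiset.mem_toFinset] at hw
      simp [hall w hw]
    have hle := Finset.card_le_card hsub
    rw [Multiset.toFinset_card_of_nodup hnodup, Finset.card_singleton] at hle
    omega
  have hz : Polynomial.aeval z p = 0 := by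
    have h2 := (Polynomial.mem_roots'.1 hzmem).2
    rwa [Polynomial.IsRoot, Polynomial.eval_map, ← Polynomial.aeval_def] at h2
  obtain ⟨σ, hσa, hσK⟩ := exists_extension_hom K hint hz
  have hsum : σ d₁ + σ d₂ = d₁ + d₂ := by
    have h2 := hσK ⟨d₁ + d₂, hsum_mem⟩
    simpa [map_add] using h2
  have h₁ := hFP₁ σ
  have h₂ := hFP₂ σ
  rw [hσa] at hsum h₁
  set w := σ d₂ with hw
  have hre : z.re + w.re = d₁.re + d₂.re := by
    have h2 := congrArg Complex.re hsum
    simpa using h2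
  have hz1 : z.re ≤ ‖z‖ := Complex.re_le_norm z
  have hw1 : w.re ≤ ‖w‖ := Complex.re_le_norm w
  have hzre : z.re = d₁.re := by linarith
  have habs : ‖z‖ = d₁.re := le_antisymm h₁ (by linarith)
  have hsq : ‖z‖ ^ 2 = z.re * z.re + z.im * z.im := by
    rw [Complex.sq_norm, Complex.normSq_apply]
  have him : z.im * z.im = 0 := by nlinarith [hsq, habs, hzre]
  refine hzne (Complex.ext hzre ?_)
  rw [hre₁]
  exact mul_self_eq_zero.mp him
end

section
/- For integers n, m with 0 < n < m, let [n]_m = sin(nπ/m)/sin(π/m). Then Q([n]_m) = Q if n = 1 or n = m − 1; Q([n]_m) = Q(cos(π/m)) if n is even and 1 < n < m − 1; and Q([n]_m) = Q(cos(2π/m)) otherwise. -/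
/-!
For `ζ = exp (iπ/m)` the quantum integer `[n]_m = (ζ^n - ζ^{-n}) / (ζ - ζ^{-1})` lies in the
cyclotomic field `ℚ(ζ)`, so by Galois theory the field it generates is determined by its stabiliser
among the automorphisms `σ_k : ζ ↦ ζ^k`. Telescoping sums put `[n]_m` in `ℚ(cos(π/m))`, and in
`ℚ(cos(2π/m))` when `n` is odd. Conversely `σ_k` sends `[n]_m` to `sin(knπ/m) / sin(kπ/m)`, and the
strict inequality `|sin(abθ)| sin θ < sin(aθ) sin(bθ)` for `2 ≤ a, b ≤ m - 2`, `θ = π/m`, shows that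
it fixes `[n]_m` only for `k ≡ ±1`, or `n` odd and `k ≡ m ± 1` (mod `2m`). These automorphisms fix
`cos(π/m)`, respectively `cos(2π/m)`.
-/

open IntermediateField Real Set

namespace IntermediateField

variable {F K M : Type*} [Field F] [Field K] [Field M] [Algebra F K] [Algebra F M]

theorem adjoin_simple_map_eq_iff (f : K →ₐ[F] M) {x y : K} :
    F⟮f x⟯ = F⟮f y⟯ ↔ F⟮x⟯ = F⟮y⟯ := by
  rw [← (map_injective f).eq_iff, adjoin_map, adjoin_map, Set.image_singleton,
    Set.image_singleton]

theorem map_mem_adjoin_simple_iff (f : K →ₐ[F] M) {x y : K} :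
    f x ∈ F⟮f y⟯ ↔ x ∈ F⟮y⟯ := by
  rw [← Set.image_singleton, ← adjoin_map, mem_map]
  exact ⟨fun ⟨z, hz, hfz⟩ => f.injective hfz ▸ hz, fun hx => ⟨x, hx, rfl⟩⟩

theorem adjoin_simple_eq_of_forall_fixes [FiniteDimensional F K] [IsGalois F K] {x c : K}
    (hx : x ∈ F⟮c⟯) (hfix : ∀ σ : K ≃ₐ[F] K, σ x = x → σ c = c) : F⟮x⟯ = F⟮c⟯ := by
  refine le_antisymm (adjoin_simple_le_iff.mpr hx) ?_
  rw [← IsGalois.fixedField_fixingSubgroup F⟮x⟯, adjoin_simple_le_iff, mem_fixedField_iff]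
  intro σ hσ
  exact hfix σ ((mem_fixingSubgroup_iff _ σ).mp hσ x (mem_adjoin_simple_self F x))

end IntermediateField

theorem IsPrimitiveRoot.isCyclotomicExtension_adjoin_simple (K : Type*) {L : Type*} [Field K]
    [Field L] [Algebra K L] {n : ℕ} [NeZero n] {ζ : L} (hζ : IsPrimitiveRoot ζ n) :
    IsCyclotomicExtension {n} K K⟮ζ⟯ := by
  have hζ_int : IsIntegral K ζ :=
    IsIntegral.of_pow (NeZero.pos n) (hζ.pow_eq_one ▸ isIntegral_one)
  change IsCyclotomicExtension {n} K K⟮ζ⟯.toSubalgebra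
  rw [adjoin_simple_toSubalgebra_of_isAlgebraic hζ_int.isAlgebraic]
  exact hζ.adjoin_isCyclotomicExtension K

section QuantumInt

variable {K M F : Type*} [Field K] [Field M] [FunLike F K M] [RingHomClass F K M]

def quantumInt (z : K) (j : ℕ) : K := (z ^ j - (z ^ j)⁻¹) / (z - z⁻¹)

def quantumCos (z : K) (j : ℕ) : K := (z ^ j + (z ^ j)⁻¹) / 2

theorem map_quantumInt (f : F) (z : K) (j : ℕ) : f (quantumInt z j) = quantumInt (f z) j := by
  simp [quantumInt, map_div₀, map_inv₀]

theorem map_quantumCos (f : F) (z : K) (j : ℕ) : f (quantumCos z j) = quantumCos (f z) j := by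
  simp [quantumCos, map_div₀, map_inv₀, map_ofNat]

end QuantumInt

theorem adjoin_quantumInt_eq_adjoin_quantumCos {K L : Type*} [Field K] [Field L] [Algebra K L]
    {N n t : ℕ} [NeZero N] {ζ : L} (hζ : IsPrimitiveRoot ζ N)
    (hmem : quantumInt ζ n ∈ K⟮quantumCos ζ t⟯)
    (hfix : ∀ k < N, quantumInt (ζ ^ k) n = quantumInt ζ n →
      quantumCos (ζ ^ k) t = quantumCos ζ t) :
    K⟮quantumInt ζ n⟯ = K⟮quantumCos ζ t⟯ := by
  have : IsCyclotomicExtension {N} K K⟮ζ⟯ := hζ.isCyclotomicExtension_adjoin_simple K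
  have : FiniteDimensional K K⟮ζ⟯ := IsCyclotomicExtension.finiteDimensional {N} K _
  have : IsGalois K K⟮ζ⟯ := IsCyclotomicExtension.isGalois {N} K _
  set g := AdjoinSimple.gen K ζ
  have hg : IsPrimitiveRoot g N := IsPrimitiveRoot.coe_submonoidClass_iff.mp hζ
  have hval_int (k : ℕ) : K⟮ζ⟯.val (quantumInt (g ^ k) n) = quantumInt (ζ ^ k) n := by
    rw [map_quantumInt, map_pow]
    rfl
  have hval_cos (k : ℕ) : K⟮ζ⟯.val (quantumCos (g ^ k) t) = quantumCos (ζ ^ k) t := by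
    rw [map_quantumCos, map_pow]
    rfl
  have hx : K⟮ζ⟯.val (quantumInt g n) = quantumInt ζ n := by simpa using hval_int 1
  have hc : K⟮ζ⟯.val (quantumCos g t) = quantumCos ζ t := by simpa using hval_cos 1
  rw [← hx, ← hc, map_mem_adjoin_simple_iff] at hmem
  rw [← hx, ← hc, adjoin_simple_map_eq_iff]
  refine adjoin_simple_eq_of_forall_fixes hmem fun σ hσ => ?_
  obtain ⟨k, hk, hσg⟩ :=
    hg.eq_pow_of_pow_eq_one (ξ := σ g) (by rw [← map_pow, hg.pow_eq_one, map_one])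
  rw [map_quantumInt, ← hσg] at hσ
  rw [map_quantumCos, ← hσg]
  apply Subtype.val_injective
  change K⟮ζ⟯.val (quantumCos (g ^ k) t) = K⟮ζ⟯.val (quantumCos g t)
  rw [hval_cos, hc, hfix k hk (by rw [← hval_int, hσ, hx])]

theorem exp_mul_I_pow (x : ℝ) (j : ℕ) :
    Complex.exp (x * Complex.I) ^ j = (cos (j * x) : ℂ) + sin (j * x) * Complex.I := by
  rw [← Complex.exp_nat_mul, ← mul_assoc, Complex.exp_mul_I]
  push_cast
  ring

theorem inv_exp_mul_I_pow (x : ℝ) (j : ℕ) :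
    (Complex.exp (x * Complex.I) ^ j)⁻¹ = (cos (j * x) : ℂ) - sin (j * x) * Complex.I := by
  rw [← Complex.exp_nat_mul, ← Complex.exp_neg, ← mul_assoc, ← neg_mul, Complex.exp_mul_I,
    Complex.cos_neg, Complex.sin_neg]
  push_cast
  ring

theorem quantumInt_exp_mul_I (x : ℝ) (j : ℕ) :
    quantumInt (Complex.exp (x * Complex.I)) j = ((sin (j * x) / sin x : ℝ) : ℂ) := by
  have h₁ := exp_mul_I_pow x 1
  have h₁' := inv_exp_mul_I_pow x 1
  rw [pow_one, Nat.cast_one, one_mul] at h₁ h₁'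
  rw [quantumInt, inv_exp_mul_I_pow, exp_mul_I_pow, h₁', h₁, Complex.ofReal_div]
  convert mul_div_mul_left _ _ (mul_ne_zero two_ne_zero Complex.I_ne_zero) using 2 <;> ring

theorem quantumCos_exp_mul_I (x : ℝ) (j : ℕ) :
    quantumCos (Complex.exp (x * Complex.I)) j = (cos (j * x) : ℂ) := by
  rw [quantumCos, inv_exp_mul_I_pow, exp_mul_I_pow]
  ring

theorem adjoin_sin_mul_div_sin_eq_adjoin_cos {m n t : ℕ} [NeZero m]
    (hmem : sin (n * (π / m)) / sin (π / m) ∈ ℚ⟮cos (t * (π / m))⟯)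
    (hfix : ∀ k < 2 * m, sin (n * (k * (π / m))) / sin (k * (π / m)) =
      sin (n * (π / m)) / sin (π / m) → cos (t * (k * (π / m))) = cos (t * (π / m))) :
    ℚ⟮sin (n * (π / m)) / sin (π / m)⟯ = ℚ⟮cos (t * (π / m))⟯ := by
  set ζ : ℂ := Complex.exp (2 * π * Complex.I / (2 * m : ℕ))
  have hζ : IsPrimitiveRoot ζ (2 * m) := Complex.isPrimitiveRoot_exp _ (NeZero.ne _)
  have hζ_pow (k : ℕ) : ζ ^ k = Complex.exp ((k * (π / m) : ℝ) * Complex.I) := by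
    rw [← Complex.exp_nat_mul]
    congr 1
    push_cast
    field_simp
  have hζ_int (k : ℕ) :
      quantumInt (ζ ^ k) n = ((sin (n * (k * (π / m))) / sin (k * (π / m)) : ℝ) : ℂ) := by
    rw [hζ_pow, quantumInt_exp_mul_I]
  have hζ_cos (k : ℕ) : quantumCos (ζ ^ k) t = ((cos (t * (k * (π / m))) : ℝ) : ℂ) := by
    rw [hζ_pow, quantumCos_exp_mul_I]
  have hx : quantumInt ζ n = ((sin (n * (π / m)) / sin (π / m) : ℝ) : ℂ) := by simpa using hζ_int 1
  have hc : quantumCos ζ t = ((cos (t * (π / m)) : ℝ) : ℂ) := by simpa using hζ_cos 1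
  let ofReal : ℝ →ₐ[ℚ] ℂ := Complex.ofRealHom.toRatAlgHom
  have hofReal (y : ℝ) : ofReal y = y := rfl
  rw [← map_mem_adjoin_simple_iff ofReal, hofReal, hofReal, ← hx, ← hc] at hmem
  rw [← adjoin_simple_map_eq_iff ofReal, hofReal, hofReal, ← hx, ← hc]
  refine adjoin_quantumInt_eq_adjoin_quantumCos hζ hmem fun k hk hkn => ?_
  rw [hζ_int, hx] at hkn
  rw [hζ_cos, hc, hfix k hk (Complex.ofReal_injective hkn)]

theorem cos_nat_mul_mem_adjoin_cos (k : ℕ) (x : ℝ) : cos (k * x) ∈ ℚ⟮cos x⟯ := by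
  have h := Polynomial.aeval_mem_adjoin_singleton ℚ (cos x) (p := Polynomial.Chebyshev.T ℚ k)
  rw [Polynomial.aeval_def, ← Polynomial.eval_map, Polynomial.Chebyshev.map_T,
    Polynomial.Chebyshev.T_real_cos, Int.cast_natCast] at h
  exact algebra_adjoin_le_adjoin ℚ _ h

theorem sin_add_two_mul_sub_sin (j r : ℕ) (x : ℝ) :
    sin ((j + 2 * r : ℕ) * x) - sin (j * x) =
      ∑ i ∈ Finset.range r, 2 * cos ((j + 2 * i + 1 : ℕ) * x) * sin x := by
  induction r with
  | zero => simp
  | succ r ih =>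
    rw [Finset.sum_range_succ, ← ih]
    have h₁ : ((j + 2 * (r + 1) : ℕ) : ℝ) * x = (j + 2 * r + 1 : ℕ) * x + x := by push_cast; ring
    have h₂ : ((j + 2 * r : ℕ) : ℝ) * x = (j + 2 * r + 1 : ℕ) * x - x := by push_cast; ring
    rw [h₁, h₂, sin_add, sin_sub]
    ring

theorem sin_mul_div_sin_mem_adjoin_cos_of_even {n : ℕ} (hn : Even n) (x : ℝ) :
    sin (n * x) / sin x ∈ ℚ⟮cos x⟯ := by
  rcases eq_or_ne (sin x) 0 with hx | hx
  · simp [hx]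
  obtain ⟨r, rfl⟩ := hn
  have h : sin ((r + r : ℕ) * x) / sin x = ∑ i ∈ Finset.range r, 2 * cos ((2 * i + 1 : ℕ) * x) := by
    rw [div_eq_iff hx, Finset.sum_mul, ← two_mul]
    simpa using sin_add_two_mul_sub_sin 0 r x
  rw [h]
  exact sum_mem fun i _ => mul_mem (ofNat_mem _ 2) (cos_nat_mul_mem_adjoin_cos _ x)

theorem sin_mul_div_sin_mem_adjoin_cos_two_mul_of_odd {n : ℕ} (hn : Odd n) (x : ℝ) :
    sin (n * x) / sin x ∈ ℚ⟮cos (2 * x)⟯ := by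
  rcases eq_or_ne (sin x) 0 with hx | hx
  · simp [hx]
  obtain ⟨r, rfl⟩ := hn
  have h : sin ((2 * r + 1 : ℕ) * x) / sin x =
      1 + ∑ i ∈ Finset.range r, 2 * cos ((i + 1 : ℕ) * (2 * x)) := by
    rw [div_eq_iff hx, add_mul, one_mul, Finset.sum_mul, ← sub_eq_iff_eq_add']
    convert sin_add_two_mul_sub_sin 1 r x using 2
    · ring_nf
    · simp
    · push_cast; ring_nf
  rw [h]
  exact add_mem (one_mem _)
    (sum_mem fun i _ => mul_mem (ofNat_mem _ 2) (cos_nat_mul_mem_adjoin_cos _ _))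

theorem mul_cos_mul_mul_sin_lt_sin_mul_mul_cos {a x : ℝ} (ha : 1 < a) (hx : 0 < x)
    (hxa : x < π / a) : a * cos (a * x) * sin x < sin (a * x) * cos x := by
  have ha₀ : 0 < a := by linarith
  let h : ℝ → ℝ := fun y => sin (a * y) * cos y - a * cos (a * y) * sin y
  have hderiv (y : ℝ) : HasDerivAt h ((a ^ 2 - 1) * (sin (a * y) * sin y)) y := by
    have hay := (hasDerivAt_id' y).const_mul a
    exact ((hay.sin.mul (hasDerivAt_cos y)).sub
      ((hay.cos.const_mul a).mul (hasDerivAt_sin y))).congr_deriv (by ring)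
  have hmono : StrictMonoOn h (Icc 0 (π / a)) := by
    refine strictMonoOn_of_deriv_pos (convex_Icc _ _) (by fun_prop) fun y hy => ?_
    rw [interior_Icc] at hy
    have hay : a * y < π := (lt_div_iff₀' ha₀).mp hy.2
    have hyπ : y < π := hy.2.trans (div_lt_self pi_pos ha)
    rw [(hderiv y).deriv]
    have := sin_pos_of_pos_of_lt_pi hy.1 hyπ
    have := sin_pos_of_pos_of_lt_pi (mul_pos ha₀ hy.1) hay
    have : 0 < a ^ 2 - 1 := by nlinarith
    positivity
  have := hmono ⟨le_rfl, by positivity⟩ ⟨hx.le, hxa.le⟩ hx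
  simp only [h, mul_zero, sin_zero, cos_zero, zero_mul, sub_zero] at this
  linarith

theorem strictAntiOn_sin_mul_div_sin {a : ℝ} (ha : 1 < a) :
    StrictAntiOn (fun x => sin (a * x) / sin x) (Ioc 0 (π / a)) := by
  have hπa : π / a < π := div_lt_self pi_pos ha
  have hsin (x : ℝ) (hx : x ∈ Ioc 0 (π / a)) : 0 < sin x :=
    sin_pos_of_pos_of_lt_pi hx.1 (hx.2.trans_lt hπa)
  refine strictAntiOn_of_deriv_neg (convex_Ioc _ _)
    (ContinuousOn.div (by fun_prop) (by fun_prop) fun x hx => (hsin x hx).ne') fun x hx => ?_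
  rw [interior_Ioc] at hx
  have hsx := hsin x ⟨hx.1, hx.2.le⟩
  have hd : HasDerivAt (fun x => sin (a * x) / sin x) _ x :=
    ((hasDerivAt_id' x).const_mul a).sin.div (hasDerivAt_sin x) hsx.ne'
  rw [hd.deriv]
  have := mul_cos_mul_mul_sin_lt_sin_mul_mul_cos ha hx.1 hx.2
  exact div_neg_of_neg_of_pos (by linarith) (by positivity)

theorem abs_sin_mul_mul_mul_sin_lt_of_le_pi_div_two {a b θ : ℝ} (ha : 1 < a) (hb : 1 < b)
    (hθ : 0 < θ) (haθ : a * θ ≤ π / 2) (hbθ : b * θ ≤ π / 2) :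
    |sin (a * (b * θ))| * sin θ < sin (a * θ) * sin (b * θ) := by
  have ha₀ : 0 < a := by linarith
  have hsθ : 0 < sin θ := sin_pos_of_pos_of_lt_pi hθ (by nlinarith [pi_pos])
  have hsa : 0 < sin (a * θ) := sin_pos_of_pos_of_lt_pi (by positivity) (by linarith [pi_pos])
  have hsb : 0 < sin (b * θ) := sin_pos_of_pos_of_lt_pi (by positivity) (by linarith [pi_pos])
  rcases lt_or_ge (a * (b * θ)) π with hsmall | hlarge
  · have hθa : θ ≤ π / a := by rw [le_div_iff₀' ha₀]; linarith [pi_pos]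
    have hbθa : b * θ ≤ π / a := by rw [le_div_iff₀' ha₀]; linarith
    have hlt := strictAntiOn_sin_mul_div_sin ha ⟨hθ, hθa⟩ ⟨by positivity, hbθa⟩
      (by nlinarith)
    rw [div_lt_div_iff₀ hsb hsθ] at hlt
    rwa [abs_of_nonneg (sin_nonneg_of_nonneg_of_le_pi (by positivity) hsmall.le)]
  · -- Jordan's inequality `2x/π ≤ sin x` on `[0, π/2]` bounds the right side below by `4θ/π`.
    have hjordan := mul_le_mul (mul_le_sin (by positivity) haθ) (mul_le_sin (by positivity) hbθ)
      (by positivity) hsa.le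
    have habθ : 4 * θ / π ≤ 2 / π * (a * θ) * (2 / π * (b * θ)) := by
      rw [div_le_iff₀ pi_pos]
      calc 4 * θ = 4 / π ^ 2 * (π * θ) * π := by field_simp
        _ ≤ 4 / π ^ 2 * (a * (b * θ) * θ) * π := by gcongr
        _ = 2 / π * (a * θ) * (2 / π * (b * θ)) * π := by ring
    have hθπ : θ < 4 * θ / π := by rw [lt_div_iff₀ pi_pos]; nlinarith [pi_lt_four]
    calc |sin (a * (b * θ))| * sin θ ≤ 1 * θ :=
          mul_le_mul (abs_sin_le_one _) (sin_le hθ.le) hsθ.le zero_le_one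
      _ < sin (a * θ) * sin (b * θ) := by linarith

theorem sin_nat_mul_pi_div_pos {m j : ℕ} (hj : 0 < j) (hjm : j < m) : 0 < sin (j * (π / m)) := by
  have hm : (0 : ℝ) < m := by norm_cast; omega
  refine sin_pos_of_pos_of_lt_pi (by positivity) ?_
  rw [← mul_div_assoc, div_lt_iff₀ hm, mul_comm π]
  exact mul_lt_mul_of_pos_right (by exact_mod_cast hjm) pi_pos

theorem abs_sin_mul_sub_mul_pi_div (c : ℕ) {m q j : ℕ} (hj : j ≤ q * m) :
    |sin (c * ((q * m - j : ℕ) * (π / m)))| = |sin (c * (j * (π / m)))| := by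
  obtain rfl | hm := eq_or_ne m 0
  · simp
  have h : (c : ℝ) * ((q * m - j : ℕ) * (π / m)) = (c * q : ℕ) * π - c * (j * (π / m)) := by
    push_cast [hj]
    field_simp
  rw [h, sin_nat_mul_pi_sub, abs_neg, abs_mul, abs_pow, abs_neg, abs_one, one_pow, one_mul]

theorem abs_sin_mul_mul_pi_div_mul_sin_lt {m a b : ℕ} (ha : 2 ≤ a) (ha' : a + 2 ≤ m) (hb : 2 ≤ b)
    (hb' : b + 2 ≤ m) :
    |sin (a * (b * (π / m)))| * sin (π / m) < |sin (a * (π / m))| * |sin (b * (π / m))| := by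
  have hm : (0 : ℝ) < m := by norm_cast; omega
  -- `j ↦ m - j` preserves every `|sin (c * (j * (π / m)))|`, so we may assume `2 * j ≤ m`.
  have hreflect (j : ℕ) (hj : 2 ≤ j) (hj' : j + 2 ≤ m) : ∃ j' : ℕ, 2 ≤ j' ∧ 2 * j' ≤ m ∧
      ∀ c : ℕ, |sin (c * (j' * (π / m)))| = |sin (c * (j * (π / m)))| := by
    rcases le_total (2 * j) m with h | h
    · exact ⟨j, hj, h, fun c => rfl⟩
    · exact ⟨m - j, by omega, by omega, fun c => by
        simpa using abs_sin_mul_sub_mul_pi_div c (q := 1) (j := j) (by omega)⟩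
  have hhalf (j : ℕ) (h : 2 * j ≤ m) : j * (π / m) ≤ π / 2 := by
    rw [← mul_div_assoc, div_le_div_iff₀ hm two_pos]
    have : (2 * j : ℝ) ≤ m := by exact_mod_cast h
    nlinarith [pi_pos]
  obtain ⟨a', ha₁, ha₂, hsa⟩ := hreflect a ha ha'
  obtain ⟨b', hb₁, hb₂, hsb⟩ := hreflect b hb hb'
  have hsa₁ := hsa 1
  have hsb₁ := hsb 1
  simp only [Nat.cast_one, one_mul] at hsa₁ hsb₁
  calc |sin (a * (b * (π / m)))| * sin (π / m) = |sin (a' * (b' * (π / m)))| * sin (π / m) := by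
        rw [← hsb a, mul_left_comm (a : ℝ), ← hsa b', mul_left_comm (b' : ℝ)]
    _ < sin (a' * (π / m)) * sin (b' * (π / m)) :=
        abs_sin_mul_mul_mul_sin_lt_of_le_pi_div_two (by exact_mod_cast ha₁)
          (by exact_mod_cast hb₁) (by positivity)
          (hhalf a' ha₂) (hhalf b' hb₂)
    _ = |sin (a * (π / m))| * |sin (b * (π / m))| := by
        rw [← hsa₁, ← hsb₁, abs_of_pos (sin_nat_mul_pi_div_pos (by omega) (by omega)),
          abs_of_pos (sin_nat_mul_pi_div_pos (by omega) (by omega))]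

theorem sin_mul_pi_add_div_sin_pi_add (n : ℕ) (x : ℝ) :
    sin (n * (π + x)) / sin (π + x) = -((-1) ^ n * (sin (n * x) / sin x)) := by
  rw [mul_add, add_comm, sin_add_nat_mul_pi, add_comm, sin_add_pi, div_neg, mul_div_assoc]

theorem eq_of_abs_sin_mul_mul_sin_eq {m n k : ℕ} (hn : 2 ≤ n) (hn' : n + 2 ≤ m) (hk : k < 2 * m)
    (hsk : sin (k * (π / m)) ≠ 0)
    (h : |sin (n * (k * (π / m)))| * sin (π / m) = sin (n * (π / m)) * |sin (k * (π / m))|) :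
    k = 1 ∨ k = m - 1 ∨ k = m + 1 ∨ k = 2 * m - 1 := by
  obtain ⟨j, hjm, hjk, hsj⟩ : ∃ j, j ≤ m ∧ (k = j ∨ k = 2 * m - j) ∧
      ∀ c : ℕ, |sin (c * (k * (π / m)))| = |sin (c * (j * (π / m)))| := by
    rcases le_total k m with hkm | hkm
    · exact ⟨k, hkm, Or.inl rfl, fun c => rfl⟩
    · exact ⟨2 * m - k, by omega, Or.inr (by omega),
        fun c => (abs_sin_mul_sub_mul_pi_div c (q := 2) (j := k) (by omega)).symm⟩
  have hsj₁ := hsj 1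
  rw [Nat.cast_one, one_mul, one_mul] at hsj₁
  rw [hsj n, hsj₁] at h
  rw [← abs_ne_zero, hsj₁, abs_ne_zero] at hsk
  have hj₀ : j ≠ 0 := by rintro rfl; simp at hsk
  have hjm' : j ≠ m := by
    rintro rfl
    exact hsk (by rw [mul_div_cancel₀ _ (Nat.cast_ne_zero.mpr (by omega)), sin_pi])
  by_contra hcon
  have hlt := abs_sin_mul_mul_pi_div_mul_sin_lt (m := m) hn hn' (b := j) (by omega) (by omega)
  rw [abs_of_pos (sin_nat_mul_pi_div_pos (by omega) (by omega))] at hlt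
  linarith

theorem eq_of_sin_mul_div_sin_eq {m n k : ℕ} (hn : 2 ≤ n) (hn' : n + 2 ≤ m) (hk : k < 2 * m)
    (h : sin (n * (k * (π / m))) / sin (k * (π / m)) = sin (n * (π / m)) / sin (π / m)) :
    k = 1 ∨ k = 2 * m - 1 ∨ Odd n ∧ (k = m - 1 ∨ k = m + 1) := by
  have hm : (m : ℝ) ≠ 0 := by norm_cast; omega
  have hs₁ := sin_nat_mul_pi_div_pos (m := m) one_pos (by omega)
  rw [Nat.cast_one, one_mul] at hs₁
  have hq_pos : 0 < sin (n * (π / m)) / sin (π / m) :=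
    div_pos (sin_nat_mul_pi_div_pos (by omega) (by omega)) hs₁
  -- `x / 0 = 0` in Lean, so the equation itself rules out `sin (k * (π / m)) = 0`.
  have hsk : sin (k * (π / m)) ≠ 0 := fun h0 => by
    rw [h0, div_zero] at h
    exact hq_pos.ne h
  have habs :
      |sin (n * (k * (π / m)))| * sin (π / m) = sin (n * (π / m)) * |sin (k * (π / m))| := by
    have := congrArg abs h
    rwa [abs_div, abs_of_pos hq_pos, div_eq_div_iff (abs_pos.mpr hsk).ne' hs₁.ne'] at this
  have hodd (x : ℝ) (hx : k * (π / m) = π + x)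
      (hq : sin (n * x) / sin x = sin (n * (π / m)) / sin (π / m)) : Odd n := by
    rw [hx, sin_mul_pi_add_div_sin_pi_add, hq] at h
    by_contra hn_even
    rw [Nat.not_odd_iff_even.mp hn_even |>.neg_one_pow, one_mul] at h
    linarith
  rcases eq_of_abs_sin_mul_mul_sin_eq hn hn' hk hsk habs with rfl | rfl | rfl | rfl
  · exact Or.inl rfl
  · refine Or.inr (Or.inr ⟨hodd (-(π / m)) ?_ ?_, Or.inl rfl⟩)
    · push_cast [show 1 ≤ m by omega]
      field_simp
      ring
    · rw [mul_neg, sin_neg, sin_neg, neg_div_neg_eq]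
  · refine Or.inr (Or.inr ⟨hodd (π / m) ?_ rfl, Or.inr rfl⟩)
    push_cast
    field_simp
  · exact Or.inr (Or.inl rfl)

theorem cos_mul_mul_pi_div_eq_of_dvd {m t k : ℕ}
    (h : (2 * m : ℤ) ∣ t * k - t ∨ (2 * m : ℤ) ∣ t * k + t) :
    cos (t * (k * (π / m))) = cos (t * (π / m)) := by
  obtain rfl | hm := eq_or_ne m 0
  · simp
  rcases h with ⟨q, hq⟩ | ⟨q, hq⟩
  · have hq' : ((t * k - t : ℤ) : ℝ) = ((2 * m * q : ℤ) : ℝ) := congrArg _ hq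
    push_cast at hq'
    have : (t : ℝ) * (k * (π / m)) = t * (π / m) + q * (2 * π) := by
      field_simp
      linear_combination hq'
    rw [this, cos_add_int_mul_two_pi]
  · have hq' : ((t * k + t : ℤ) : ℝ) = ((2 * m * q : ℤ) : ℝ) := congrArg _ hq
    push_cast at hq'
    have : (t : ℝ) * (k * (π / m)) = q * (2 * π) - t * (π / m) := by
      field_simp
      linear_combination hq'
    rw [this, cos_int_mul_two_pi_sub]

/-- Lemma 5.3: for `0 < n < m`, the field generated by the quantum integer
`[n]_m = sin(nπ/m)/sin(π/m)` is `ℚ` if `n = 1` or `n = m-1`; is `ℚ(cos(π/m))` if `n`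
is even with `1 < n < m-1`; and is `ℚ(cos(2π/m))` otherwise. -/
theorem stmt13 (n m : ℕ) (h0 : 0 < n) (hnm : n < m) :
    ((n = 1 ∨ n = m - 1) →
      ℚ⟮Real.sin ((n : ℝ) * Real.pi / m) / Real.sin (Real.pi / m)⟯ = ⊥) ∧
    ((n % 2 = 0 ∧ 1 < n ∧ n < m - 1) →
      ℚ⟮Real.sin ((n : ℝ) * Real.pi / m) / Real.sin (Real.pi / m)⟯ =
        ℚ⟮Real.cos (Real.pi / m)⟯) ∧
    ((¬(n = 1 ∨ n = m - 1) ∧ ¬(n % 2 = 0 ∧ 1 < n ∧ n < m - 1)) →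
      ℚ⟮Real.sin ((n : ℝ) * Real.pi / m) / Real.sin (Real.pi / m)⟯ =
        ℚ⟮Real.cos ((2 : ℝ) * Real.pi / m)⟯) := by
  have : NeZero m := ⟨by omega⟩
  have hm : (0 : ℝ) < m := by norm_cast; omega
  have hsin : sin (π / m) ≠ 0 := by
    simpa using (sin_nat_mul_pi_div_pos (m := m) one_pos (by omega)).ne'
  simp only [mul_div_assoc]
  refine ⟨?_, fun ⟨heven, hn₁, hn₂⟩ => ?_, fun ⟨hn, hodd⟩ => ?_⟩
  · rintro (rfl | rfl)
    · rw [Nat.cast_one, one_mul, div_self hsin, adjoin_one]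
    · have : ((m - 1 : ℕ) : ℝ) * (π / m) = π - π / m := by
        push_cast [show 1 ≤ m by omega]
        rw [sub_mul, one_mul, mul_div_cancel₀ _ hm.ne']
      rw [this, sin_pi_sub, div_self hsin, adjoin_one]
  · have h := adjoin_sin_mul_div_sin_eq_adjoin_cos (m := m) (n := n) (t := 1)
      (by simpa using sin_mul_div_sin_mem_adjoin_cos_of_even (Nat.even_iff.mpr heven) (π / m))
      fun k hk hkn => cos_mul_mul_pi_div_eq_of_dvd ?_
    · simpa using h
    rcases eq_of_sin_mul_div_sin_eq (by omega) (by omega) hk hkn with rfl | rfl | ⟨hodd, -⟩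
    · exact Or.inl ⟨0, by ring⟩
    · exact Or.inr ⟨1, by omega⟩
    · exact absurd hodd (Nat.not_odd_iff_even.mpr (Nat.even_iff.mpr heven))
  · have hodd : Odd n := Nat.odd_iff.mpr (by omega)
    have h := adjoin_sin_mul_div_sin_eq_adjoin_cos (m := m) (n := n) (t := 2)
      (by simpa using sin_mul_div_sin_mem_adjoin_cos_two_mul_of_odd hodd (π / m))
      fun k hk hkn => cos_mul_mul_pi_div_eq_of_dvd ?_
    · simpa using h
    rcases eq_of_sin_mul_div_sin_eq (by omega) (by omega) hk hkn with rfl | rfl | ⟨-, rfl | rfl⟩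
    · exact Or.inl ⟨0, by ring⟩
    · exact Or.inr ⟨2, by omega⟩
    · exact Or.inr ⟨1, by omega⟩
    · exact Or.inl ⟨1, by omega⟩
end
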